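/- arXiv:1904.13133 — 2 statements merged into one kernel-verified Lean document; each statement's English description precedes it below -/
import Mathlib

section
/- Let S be a discrete countable inverse semigroup with identity and with a minimal projection e₀ ∈ E(S), and let α be a representation of S on a set X. Then the following are equivalent: (1) X is S-amenable; (2) D_{e₀} is not S-paradoxical; (3) D_{e₀} is S-domain Følner. -/
open scoped ENNReal

/-- Mixin recording that a semigroup with a star operation is an inverse semigroup:
for every `s` the element `star s` is the unique `t` with `s t s = s` and `t s t = t`. -/
class IsInverseSemigroup (S : Type*) [Semigroup S] [Star S] : Prop where
  mul_star_mul_self : ∀ s : S, s * star s * s = s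
  star_mul_self_mul_star : ∀ s : S, star s * s * star s = star s
  star_unique : ∀ s t : S, s * t * s = s → t * s * t = t → t = star s

/-- A representation of a unital inverse semigroup `S` on a set `X`: a unital semigroup
homomorphism into the inverse semigroup of partial bijections of `X` (encoded as `PEquiv`s)
compatible with the involution.  The domain of the partial bijection `α s` is `D_{s*s}` and
its range is `D_{ss*}`; for an idempotent `e`, `D_e` is the domain of `α e`. -/
structure InverseSemigroupRep (S : Type*) [Monoid S] [Star S] (X : Type*) where
  α : S → X ≃. X
  map_one : α 1 = PEquiv.refl X
  map_star : ∀ s : S, α (star s) = (α s).symm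
  map_mul : ∀ s t : S, α (s * t) = (α t).trans (α s)

/-- A finitely additive `[0,∞]`-valued measure on the power set of `X`. -/
def IsFinAddMeasure {X : Type*} (μ : Set X → ℝ≥0∞) : Prop :=
  μ (∅ : Set X) = 0 ∧ ∀ A B : Set X, Disjoint A B → μ (A ∪ B) = μ A + μ B

namespace InverseSemigroupRep

variable {S X : Type*} [Monoid S] [Star S] (r : InverseSemigroupRep S X)

/-- The domain `D_{s*s}` of the partial bijection `α s`; for an idempotent `e`,
`r.dom e` is the set `D_e`. -/
def dom (s : S) : Set X := {x | ((r.α s) x).isSome}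

/-- The image `α_s(B)` of a subset `B ⊆ X` under the partial bijection `α s`. -/
def im (s : S) (B : Set X) : Set X := {y | ∃ x ∈ B, (r.α s) x = some y}

/-- `A ⊆ X` is `S`-domain measurable: there is a finitely additive measure on `𝒫(X)`
normalized at `A` and invariant on domains. -/
def SDomainMeasurableSet (A : Set X) : Prop :=
  ∃ μ : Set X → ℝ≥0∞, IsFinAddMeasure μ ∧ μ A = 1 ∧
    ∀ (s : S) (B : Set X), B ⊆ r.dom s → μ (r.im s B) = μ B

/-- `A ⊆ X` is `S`-amenable: there is a finitely additive measure on `𝒫(X)` normalized at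
`A`, invariant on domains, and localized (`μ(B) = μ(B ∩ D_{t*t})` for all `t`). -/
def SAmenableSet (A : Set X) : Prop :=
  ∃ μ : Set X → ℝ≥0∞, IsFinAddMeasure μ ∧ μ A = 1 ∧
    (∀ (s : S) (B : Set X), B ⊆ r.dom s → μ (r.im s B) = μ B) ∧
    (∀ (t : S) (B : Set X), μ B = μ (B ∩ r.dom t))

/-- `A ⊆ X` is `S`-paradoxical: `A` admits two disjoint families of pairwise disjoint
subsets, each contained in the appropriate domain, whose images partition `A` twice. -/
def SParadoxical (A : Set X) : Prop :=
  ∃ (n m : ℕ) (s : Fin n → S) (t : Fin m → S) (As : Fin n → Set X) (Bs : Fin m → Set X),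
    (∀ i, As i ⊆ A) ∧ (∀ j, Bs j ⊆ A) ∧
    (∀ i, As i ⊆ r.dom (s i)) ∧ (∀ j, Bs j ⊆ r.dom (t j)) ∧
    (∀ i j, i ≠ j → Disjoint (As i) (As j)) ∧
    (∀ i j, i ≠ j → Disjoint (Bs i) (Bs j)) ∧
    (∀ i j, Disjoint (As i) (Bs j)) ∧
    (∀ i j, i ≠ j → Disjoint (r.im (s i) (As i)) (r.im (s j) (As j))) ∧
    (∀ i j, i ≠ j → Disjoint (r.im (t i) (Bs i)) (r.im (t j) (Bs j))) ∧
    (⋃ i, r.im (s i) (As i)) = A ∧ (⋃ j, r.im (t j) (Bs j)) = A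

/-- `A ⊆ X` is `S`-domain Følner: there is a sequence of finite non-empty subsets `F n ⊆ A`
with `|α_s(F n ∩ D_{s*s}) \ F n| / |F n| → 0` for every `s ∈ S`. -/
def SDomainFolner (A : Set X) : Prop :=
  ∃ F : ℕ → Finset X, (∀ n, (F n).Nonempty) ∧ (∀ n, (F n : Set X) ⊆ A) ∧
    ∀ s : S, Filter.Tendsto
      (fun n => ((r.im s ((F n : Set X) ∩ r.dom s) \ (F n : Set X)).ncard : ℝ) / (F n).card)
      Filter.atTop (nhds 0)

end InverseSemigroupRep

/-!
Under the minimality of `e₀`, the set `Y = D_{e₀}` lies in every domain `D_{s*s}` and is mapped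
into itself by every `α_s`. An invariant measure normalised on `Y` forbids a paradoxical
decomposition of `Y`, which would have mass `2`. A Følner sequence `F n ⊆ Y` yields an amenability
measure on `X` as an ultrafilter limit of the relative densities `|B ∩ F n| / |F n|`; localisation
holds because the `F n` lie in every domain. Conversely, if `Y` is not Følner, a finite `K ⊆ S`
enlarges every finite `F ⊆ Y` by a factor `1 + ε`; iterating, a finite set of words `W` at least
doubles every finite `F ⊆ Y`, and Hall's marriage theorem turns this into an injection
`Y × Bool → Y` moving each point by a word of `W`, which is a paradoxical decomposition of `Y`.
-/

open Set Filter Topology Function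
open scoped Pointwise

namespace IsFinAddMeasure

variable {X : Type*} {μ : Set X → ℝ≥0∞}

lemma mono (hμ : IsFinAddMeasure μ) {A B : Set X} (h : A ⊆ B) : μ A ≤ μ B := by
  rw [← union_sdiff_cancel h, hμ.2 _ _ disjoint_sdiff_right]
  exact le_self_add

lemma measure_biUnion_finset (hμ : IsFinAddMeasure μ) {ι : Type*} {C : ι → Set X}
    (hC : Pairwise (Disjoint on C)) (I : Finset ι) : μ (⋃ i ∈ I, C i) = ∑ i ∈ I, μ (C i) := by
  classical
  induction I using Finset.induction_on with
  | empty => simpa using hμ.1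
  | insert i I hi ih =>
    rw [Finset.set_biUnion_insert, hμ.2 _ _ ?_, ih, Finset.sum_insert hi]
    exact disjoint_iUnion₂_right.2 fun j hj => hC (ne_of_mem_of_not_mem hj hi).symm

lemma measure_iUnion (hμ : IsFinAddMeasure μ) {ι : Type*} [Fintype ι] {C : ι → Set X}
    (hC : Pairwise (Disjoint on C)) : μ (⋃ i, C i) = ∑ i, μ (C i) := by
  simpa using hμ.measure_biUnion_finset hC Finset.univ

end IsFinAddMeasure

section RelDensity

variable {X : Type*}

noncomputable def relDensity (F : Finset X) (B : Set X) : ℝ := ((B ∩ ↑F).ncard : ℝ) / F.card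

lemma relDensity_nonneg (F : Finset X) (B : Set X) : 0 ≤ relDensity F B := by
  unfold relDensity; positivity

lemma relDensity_le_one (F : Finset X) (B : Set X) : relDensity F B ≤ 1 := by
  refine div_le_one_of_le₀ ?_ (Nat.cast_nonneg _)
  rw [← ncard_coe_finset]
  exact_mod_cast ncard_le_ncard inter_subset_right F.finite_toSet

lemma relDensity_union (F : Finset X) {A B : Set X} (h : Disjoint A B) :
    relDensity F (A ∪ B) = relDensity F A + relDensity F B := by
  rw [relDensity, relDensity, relDensity, ← add_div, union_inter_distrib_right,
    ncard_union_eq (h.mono inter_subset_left inter_subset_left)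
      (F.finite_toSet.inter_of_right A) (F.finite_toSet.inter_of_right B), Nat.cast_add]

lemma relDensity_univ {F : Finset X} (hF : F.Nonempty) : relDensity F univ = 1 := by
  rw [relDensity, univ_inter, ncard_coe_finset, div_self (Nat.cast_ne_zero.2 hF.card_pos.ne')]

lemma relDensity_empty (F : Finset X) : relDensity F ∅ = 0 := by
  simp [relDensity]

theorem exists_isFinAddMeasure_of_relDensity (F : ℕ → Finset X) (hF : ∀ n, (F n).Nonempty) :
    ∃ μ : Set X → ℝ≥0∞, IsFinAddMeasure μ ∧ μ univ = 1 ∧ ∀ B C : Set X,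
      Tendsto (fun n => relDensity (F n) B - relDensity (F n) C) atTop (𝓝 0) → μ B = μ C := by
  set U := Ultrafilter.of (atTop : Filter ℕ)
  have hlim : ∀ B, ∃ l, Tendsto (fun n => relDensity (F n) B) U (𝓝 l) := fun B => by
    obtain ⟨l, -, hl⟩ := isCompact_Icc.ultrafilter_le_nhds (U.map fun n => relDensity (F n) B)
      (le_principal_iff.2 (mem_map.2 (univ_mem' fun n =>
        ⟨relDensity_nonneg (F n) B, relDensity_le_one (F n) B⟩)))
    exact ⟨l, hl⟩
  choose L hL using hlim
  have hconst : ∀ B c, (∀ n, relDensity (F n) B = c) → L B = c := fun B c h =>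
    tendsto_nhds_unique (hL B) (by simp only [h]; exact tendsto_const_nhds)
  refine ⟨fun B => ENNReal.ofReal (L B), ⟨?_, fun A B hAB => ?_⟩, ?_, fun B C h => ?_⟩
  · simp [hconst ∅ 0 (fun n => relDensity_empty (F n))]
  · have hadd : L (A ∪ B) = L A + L B := tendsto_nhds_unique (hL (A ∪ B))
      (((hL A).add (hL B)).congr fun n => (relDensity_union (F n) hAB).symm)
    have hnonneg : ∀ B, 0 ≤ L B := fun B =>
      ge_of_tendsto (hL B) (Eventually.of_forall fun n => relDensity_nonneg (F n) B)
    simp only [hadd, ENNReal.ofReal_add (hnonneg A) (hnonneg B)]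
  · simp [hconst univ 1 (fun n => relDensity_univ (hF n))]
  · simp only [sub_eq_zero.1 (tendsto_nhds_unique ((hL B).sub (hL C))
      (h.mono_left (Ultrafilter.of_le _)))]

end RelDensity

namespace InverseSemigroupRep

variable {S X : Type*} [Monoid S] [Star S] (r : InverseSemigroupRep S X)
  {s t : S} {x y : X} {A B : Set X}

lemma mem_dom : x ∈ r.dom s ↔ ∃ y, r.α s x = some y := Option.isSome_iff_exists

lemma mem_im : y ∈ r.im s B ↔ ∃ x ∈ B, r.α s x = some y := Iff.rfl

lemma mem_dom_of_eq_some (h : r.α s x = some y) : x ∈ r.dom s := r.mem_dom.2 ⟨y, h⟩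

lemma α_injective (h : r.α s x = some y) {x' : X} (h' : r.α s x' = some y) : x = x' := by
  rw [← (r.α s).eq_some_iff] at h h'
  exact Option.some_injective _ (h.symm.trans h')

lemma α_star_eq_some : r.α (star s) y = some x ↔ r.α s x = some y := by
  rw [r.map_star, PEquiv.eq_some_iff]

lemma α_mul_eq_some : r.α (s * t) x = some y ↔ ∃ z, r.α t x = some z ∧ r.α s z = some y := by
  rw [r.map_mul, PEquiv.trans_eq_some]

lemma mem_im_star : x ∈ r.im (star s) B ↔ ∃ y ∈ B, r.α s x = some y := by
  simp only [mem_im, α_star_eq_some]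

lemma im_mono (h : A ⊆ B) : r.im s A ⊆ r.im s B := fun _ ⟨x, hx, hxy⟩ => ⟨x, h hx, hxy⟩

lemma im_inter_dom (s : S) (B : Set X) : r.im s (B ∩ r.dom s) = r.im s B :=
  Subset.antisymm (r.im_mono inter_subset_left)
    fun _ ⟨x, hx, hxy⟩ => ⟨x, ⟨hx, r.mem_dom_of_eq_some hxy⟩, hxy⟩

lemma im_subset_dom_star (s : S) (B : Set X) : r.im s B ⊆ r.dom (star s) :=
  fun _ ⟨_, _, hxy⟩ => r.mem_dom_of_eq_some (r.α_star_eq_some.2 hxy)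

lemma im_star_im (h : B ⊆ r.dom s) : r.im (star s) (r.im s B) = B := by
  ext x
  rw [mem_im_star]
  constructor
  · rintro ⟨y, ⟨x', hx', hx'y⟩, hxy⟩
    rwa [r.α_injective hxy hx'y]
  · intro hx
    obtain ⟨y, hxy⟩ := r.mem_dom.1 (h hx)
    exact ⟨y, ⟨x, hx, hxy⟩, hxy⟩

lemma im_eq_preimage_image (s : S) (B : Set X) : r.im s B = some ⁻¹' (r.α s '' B) := rfl

lemma ncard_im (h : B ⊆ r.dom s) : (r.im s B).ncard = B.ncard := by
  rw [im_eq_preimage_image, ncard_preimage_of_injective_subset_range (Option.some_injective X)]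
  · refine InjOn.ncard_image fun x hx x' _ hxx' => ?_
    obtain ⟨y, hxy⟩ := r.mem_dom.1 (h hx)
    exact r.α_injective hxy (hxx' ▸ hxy)
  · rintro _ ⟨x, hx, rfl⟩
    obtain ⟨y, hxy⟩ := r.mem_dom.1 (h hx)
    exact ⟨y, hxy.symm⟩

lemma finite_im (hB : B.Finite) (s : S) : (r.im s B).Finite := by
  rw [im_eq_preimage_image]
  exact (hB.image _).preimage (Option.some_injective X).injOn

lemma dom_mul_subset (s t : S) : r.dom (s * t) ⊆ r.dom t := fun x hx => by
  obtain ⟨y, hxy⟩ := r.mem_dom.1 hx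
  obtain ⟨z, hxz, -⟩ := r.α_mul_eq_some.1 hxy
  exact r.mem_dom_of_eq_some hxz

lemma dom_star_mul_self (s : S) : r.dom (star s * s) = r.dom s := by
  refine Subset.antisymm (r.dom_mul_subset _ _) fun x hx => ?_
  obtain ⟨y, hxy⟩ := r.mem_dom.1 hx
  exact r.mem_dom_of_eq_some (r.α_mul_eq_some.2 ⟨y, hxy, r.α_star_eq_some.2 hxy⟩)

lemma dom_subset_dom_of_minimal {e₀ : S}
    (hmin : ∀ f : S, (∃ s : S, f = star s * s) → e₀ * f = e₀) (s : S) : r.dom e₀ ⊆ r.dom s := by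
  rw [← hmin _ ⟨s, rfl⟩, ← r.dom_star_mul_self s]
  exact r.dom_mul_subset _ _

lemma im_dom_subset_of_minimal {e₀ : S}
    (hmin : ∀ f : S, (∃ s : S, f = star s * s) → e₀ * f = e₀) (s : S) :
    r.im s (r.dom e₀) ⊆ r.dom e₀ := by
  rintro y ⟨x, hx, hxy⟩
  obtain ⟨w, hxw⟩ := r.mem_dom.1 (r.dom_subset_dom_of_minimal hmin (e₀ * s) hx)
  obtain ⟨z, hxz, hzw⟩ := r.α_mul_eq_some.1 hxw
  rw [hxz, Option.some_inj] at hxy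
  exact r.mem_dom_of_eq_some (hxy ▸ hzw)

variable {r} in
lemma SAmenableSet.sDomainMeasurableSet_dom (h : r.SAmenableSet univ) (t : S) :
    r.SDomainMeasurableSet (r.dom t) := by
  obtain ⟨μ, hμ, huniv, hinv, hloc⟩ := h
  exact ⟨μ, hμ, by rw [← univ_inter (r.dom t), ← hloc, huniv], hinv⟩

lemma not_sParadoxical_of_sDomainMeasurableSet (h : r.SDomainMeasurableSet A) :
    ¬ r.SParadoxical A := by
  rintro ⟨n, m, s, t, As, Bs, hAsub, hBsub, hAdom, hBdom, hAdisj, hBdisj, hABdisj,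
    hAimdisj, hBimdisj, hAcover, hBcover⟩
  obtain ⟨μ, hμ, hA, hinv⟩ := h
  have hsum : ∀ {k : ℕ} (u : Fin k → S) (P : Fin k → Set X), (∀ i, P i ⊆ r.dom (u i)) →
      (∀ i j, i ≠ j → Disjoint (r.im (u i) (P i)) (r.im (u j) (P j))) →
      (⋃ i, r.im (u i) (P i)) = A → ∑ i, μ (P i) = 1 := by
    intro k u P hdom hdisj hcover
    rw [← hA, ← hcover, IsFinAddMeasure.measure_iUnion hμ fun i j => hdisj i j]
    exact Finset.sum_congr rfl fun i _ => (hinv _ _ (hdom i)).symm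
  have htwo : μ ((⋃ i, As i) ∪ ⋃ j, Bs j) = 2 := by
    rw [hμ.2 _ _ (disjoint_iUnion_left.2 fun i => disjoint_iUnion_right.2 (hABdisj i)),
      IsFinAddMeasure.measure_iUnion hμ fun i j => hAdisj i j,
      IsFinAddMeasure.measure_iUnion hμ fun i j => hBdisj i j,
      hsum s As hAdom hAimdisj hAcover, hsum t Bs hBdom hBimdisj hBcover, one_add_one_eq_two]
  have hle := IsFinAddMeasure.mono hμ (union_subset (iUnion_subset hAsub) (iUnion_subset hBsub))
  rw [htwo, hA] at hle
  norm_num at hle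

lemma ncard_inter_le_ncard_im_inter_add {F : Set X} (hF : F.Finite) (hB : B ⊆ r.dom s) :
    (B ∩ F).ncard ≤ (r.im s B ∩ F).ncard + (r.im s F \ F).ncard := by
  have hsub : r.im s (B ∩ F) ⊆ (r.im s B ∩ F) ∪ (r.im s F \ F) := fun y hy => by
    by_cases hyF : y ∈ F
    · exact Or.inl ⟨r.im_mono inter_subset_left hy, hyF⟩
    · exact Or.inr ⟨r.im_mono inter_subset_right hy, hyF⟩
  calc (B ∩ F).ncard = (r.im s (B ∩ F)).ncard := (r.ncard_im (inter_subset_left.trans hB)).symm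
    _ ≤ ((r.im s B ∩ F) ∪ (r.im s F \ F)).ncard :=
      ncard_le_ncard hsub ((hF.inter_of_right _).union (r.finite_im hF s).sdiff)
    _ ≤ _ := ncard_union_le _ _

lemma abs_relDensity_im_sub_le (F : Finset X) (hB : B ⊆ r.dom s) :
    |relDensity F (r.im s B) - relDensity F B| ≤
      ((r.im s (↑F ∩ r.dom s) \ ↑F).ncard : ℝ) / F.card +
        ((r.im (star s) (↑F ∩ r.dom (star s)) \ ↑F).ncard : ℝ) / F.card := by
  have h₁ := r.ncard_inter_le_ncard_im_inter_add F.finite_toSet hB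
  have h₂ := r.ncard_inter_le_ncard_im_inter_add F.finite_toSet (r.im_subset_dom_star s B)
  rw [r.im_star_im hB] at h₂
  rw [relDensity, relDensity, ← sub_div, ← add_div, abs_div, Nat.abs_cast, r.im_inter_dom,
    r.im_inter_dom]
  refine div_le_div_of_nonneg_right (abs_sub_le_iff.2 ⟨?_, ?_⟩) (Nat.cast_nonneg _)
  · have : ((r.im s B ∩ ↑F).ncard : ℝ) ≤ (B ∩ ↑F).ncard + (r.im (star s) ↑F \ ↑F).ncard := by
      exact_mod_cast h₂
    linarith [(Nat.cast_nonneg _ : (0 : ℝ) ≤ (r.im s ↑F \ ↑F).ncard)]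
  · have : ((B ∩ ↑F).ncard : ℝ) ≤ (r.im s B ∩ ↑F).ncard + (r.im s ↑F \ ↑F).ncard := by
      exact_mod_cast h₁
    linarith [(Nat.cast_nonneg _ : (0 : ℝ) ≤ (r.im (star s) ↑F \ ↑F).ncard)]

theorem sAmenableSet_univ_of_sDomainFolner (hA : ∀ t, A ⊆ r.dom t)
    (h : r.SDomainFolner A) : r.SAmenableSet univ := by
  obtain ⟨F, hne, hsub, hfol⟩ := h
  obtain ⟨μ, hμ, huniv, hμeq⟩ := exists_isFinAddMeasure_of_relDensity F hne
  refine ⟨μ, hμ, huniv, fun s B hB => hμeq _ _ ?_, fun t B => hμeq _ _ ?_⟩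
  · exact squeeze_zero_norm (fun n => r.abs_relDensity_im_sub_le (F n) hB)
      (by simpa using (hfol s).add (hfol (star s)))
  · have hloc : ∀ n, relDensity (F n) (B ∩ r.dom t) = relDensity (F n) B := fun n => by
      rw [relDensity, relDensity, inter_assoc, inter_eq_right.2 ((hsub n).trans (hA t))]
    simp [hloc]

def ExpandsBy (A : Set X) (K : Finset S) (ε : ℝ) : Prop :=
  ∀ F : Finset X, F.Nonempty → ↑F ⊆ A → ∃ s ∈ K, ε * F.card < ((r.im s ↑F \ ↑F).ncard : ℝ)

lemma exists_expansion_of_not_sDomainFolner [Countable S] (h : ¬ r.SDomainFolner A) :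
    ∃ (K : Finset S) (ε : ℝ), 0 < ε ∧ r.ExpandsBy A K ε := by
  classical
  by_contra! hcon
  unfold ExpandsBy at hcon
  push Not at hcon
  apply h
  obtain ⟨φ, hφ⟩ := exists_surjective_nat S
  choose F hne hsub hsmall using fun n : ℕ =>
    hcon ((Finset.range (n + 1)).image φ) (1 / (n + 1)) (by positivity)
  refine ⟨F, hne, hsub, fun s => ?_⟩
  obtain ⟨k, rfl⟩ := hφ s
  refine squeeze_zero' (Eventually.of_forall fun n => by positivity) ?_
    tendsto_one_div_add_atTop_nhds_zero_nat
  filter_upwards [eventually_ge_atTop k] with n hkn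
  rw [im_inter_dom, div_le_iff₀ (by exact_mod_cast (hne n).card_pos)]
  exact hsmall n (φ k) (Finset.mem_image_of_mem φ (Finset.mem_range.2 (Nat.lt_succ_of_le hkn)))

lemma sParadoxical_of_pieces {ι : Type*} [Finite ι] (u : ι → S) (P : Bool → ι → Set X)
    (hsub : ∀ b i, P b i ⊆ A) (hdom : ∀ b i, P b i ⊆ r.dom (u i))
    (hdisj : Pairwise fun p q : Bool × ι => Disjoint (P p.1 p.2) (P q.1 q.2))
    (himdisj : ∀ b, Pairwise fun i j => Disjoint (r.im (u i) (P b i)) (r.im (u j) (P b j)))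
    (hcover : ∀ b, ⋃ i, r.im (u i) (P b i) = A) : r.SParadoxical A := by
  let e := (Finite.equivFin ι).symm
  have hne : ∀ (b : Bool) {i j : Fin (Nat.card ι)}, i ≠ j → (b, e i) ≠ (b, e j) :=
    fun b i j hij h => hij (e.injective (Prod.ext_iff.1 h).2)
  refine ⟨_, _, u ∘ e, u ∘ e, P false ∘ e, P true ∘ e, fun _ => hsub _ _, fun _ => hsub _ _,
    fun _ => hdom _ _, fun _ => hdom _ _, fun i j hij => hdisj (hne false hij),
    fun i j hij => hdisj (hne true hij), fun i j => @hdisj (false, e i) (true, e j) (by simp),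
    fun i j hij => himdisj _ (e.injective.ne hij), fun i j hij => himdisj _ (e.injective.ne hij),
    ?_, ?_⟩
  · exact (e.surjective.iUnion_comp fun i => r.im (u i) (P false i)).trans (hcover false)
  · exact (e.surjective.iUnion_comp fun i => r.im (u i) (P true i)).trans (hcover true)

/-- With `k p ∈ W` a word sending `p.1` to `Φ p`, the pieces `Φ '' {p | p.2 = b ∧ k p = w}` are
moved back by `star w` onto a partition of `A`, once for each `b : Bool`. -/
lemma sParadoxical_of_injective (hinv : ∀ s, r.im s A ⊆ A) (W : Finset S) (Φ : A × Bool → X)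
    (hΦ : Injective Φ) (hW : ∀ p, ∃ w ∈ W, r.α w p.1 = some (Φ p)) : r.SParadoxical A := by
  choose k hkW hk using hW
  let P : Bool → W → Set X := fun b i => Φ '' {p | p.2 = b ∧ k p = i}
  have him : ∀ b (i : W), r.im (star i.1) (P b i) = Subtype.val '' {a : A | k (a, b) = i} := by
    intro b i
    ext x
    rw [mem_im_star]
    constructor
    · rintro ⟨_, ⟨p, ⟨rfl, hpi⟩, rfl⟩, hx⟩
      exact ⟨p.1, hpi, (r.α_injective hx (hpi ▸ hk p)).symm⟩
    · rintro ⟨a, ha, rfl⟩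
      exact ⟨Φ (a, b), ⟨(a, b), ⟨rfl, ha⟩, rfl⟩, ha ▸ hk (a, b)⟩
  refine r.sParadoxical_of_pieces (fun i : W => star i.1) P ?_ ?_ ?_ ?_ ?_
  · rintro b i _ ⟨p, -, rfl⟩
    exact hinv _ ⟨p.1, p.1.2, hk p⟩
  · rintro b i _ ⟨p, ⟨-, hpi⟩, rfl⟩
    exact r.mem_dom_of_eq_some (r.α_star_eq_some.2 (hpi ▸ hk p))
  · rintro ⟨b, i⟩ ⟨b', i'⟩ hne
    refine disjoint_left.2 ?_
    rintro _ ⟨p, ⟨hpb, hpi⟩, rfl⟩ ⟨q, ⟨hqb, hqi⟩, hqp⟩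
    rw [hΦ hqp] at hqb hqi
    exact hne (Prod.ext (hpb.symm.trans hqb) (Subtype.ext (hpi.symm.trans hqi)))
  · intro b i j hij
    rw [him, him, disjoint_image_iff Subtype.val_injective]
    exact disjoint_left.2 fun a ha ha' => hij (Subtype.ext (ha.symm.trans ha'))
  · intro b
    simp_rw [him, ← image_iUnion]
    rw [eq_univ_of_forall fun a => mem_iUnion.2 ⟨⟨k (a, b), hkW _⟩, rfl⟩, image_univ,
      Subtype.range_coe]

def imFinset (s : S) (F : Finset X) : Finset X :=
  F.filterMap (r.α s) fun _ _ _ h h' => r.α_injective h h'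

lemma mem_imFinset {F : Finset X} : y ∈ r.imFinset s F ↔ ∃ x ∈ F, r.α s x = some y :=
  Finset.mem_filterMap _

@[simp, norm_cast]
lemma coe_imFinset (s : S) (F : Finset X) : (r.imFinset s F : Set X) = r.im s F :=
  Finset.coe_filterMap _

section Doubling

variable [DecidableEq X]

def imBiUnion (W : Finset S) (F : Finset X) : Finset X := W.biUnion fun w => r.imFinset w F

lemma mem_imBiUnion {W : Finset S} {F : Finset X} :
    y ∈ r.imBiUnion W F ↔ ∃ w ∈ W, ∃ x ∈ F, r.α w x = some y := by
  simp only [imBiUnion, Finset.mem_biUnion, mem_imFinset]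

lemma imBiUnion_one (F : Finset X) : r.imBiUnion 1 F = F := by
  ext y
  simp [mem_imBiUnion, r.map_one]

lemma imBiUnion_mul [DecidableEq S] (W V : Finset S) (F : Finset X) :
    r.imBiUnion (W * V) F = r.imBiUnion W (r.imBiUnion V F) := by
  ext y
  simp only [mem_imBiUnion, Finset.mem_mul]
  constructor
  · rintro ⟨_, ⟨w, hw, v, hv, rfl⟩, x, hx, hxy⟩
    obtain ⟨z, hxz, hzy⟩ := r.α_mul_eq_some.1 hxy
    exact ⟨w, hw, z, ⟨v, hv, x, hx, hxz⟩, hzy⟩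
  · rintro ⟨w, hw, z, ⟨v, hv, x, hx, hxz⟩, hzy⟩
    exact ⟨w * v, ⟨w, hw, v, hv, rfl⟩, x, hx, r.α_mul_eq_some.2 ⟨z, hxz, hzy⟩⟩

lemma imBiUnion_pow [DecidableEq S] (W : Finset S) (n : ℕ) (F : Finset X) :
    r.imBiUnion (W ^ n) F = (r.imBiUnion W)^[n] F := by
  induction n with
  | zero => exact r.imBiUnion_one F
  | succ n ih => rw [pow_succ', imBiUnion_mul, ih, Function.iterate_succ_apply']

lemma coe_imBiUnion_subset (hinv : ∀ s, r.im s A ⊆ A) (W : Finset S) {F : Finset X}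
    (hF : ↑F ⊆ A) : ↑(r.imBiUnion W F) ⊆ A := fun y hy => by
  obtain ⟨w, -, x, hx, hxy⟩ := r.mem_imBiUnion.1 hy
  exact hinv w ⟨x, hF hx, hxy⟩

lemma card_imBiUnion_insert_one_ge [DecidableEq S] {K : Finset S} {ε : ℝ}
    (hK : r.ExpandsBy A K ε)
    {F : Finset X} (hF : ↑F ⊆ A) : (1 + ε) * F.card ≤ (r.imBiUnion (insert 1 K) F).card := by
  obtain rfl | hne := F.eq_empty_or_nonempty
  · simp
  obtain ⟨s, hsK, hs⟩ := hK F hne hF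
  have hsub : F ∪ (r.imFinset s F \ F) ⊆ r.imBiUnion (insert 1 K) F := by
    refine Finset.union_subset (fun y hy => r.mem_imBiUnion.2
      ⟨1, Finset.mem_insert_self _ _, y, hy, by simp [r.map_one]⟩) fun y hy => ?_
    obtain ⟨x, hx, hxy⟩ := r.mem_imFinset.1 (Finset.mem_sdiff.1 hy).1
    exact r.mem_imBiUnion.2 ⟨s, Finset.mem_insert_of_mem hsK, x, hx, hxy⟩
  have hcard := Finset.card_le_card hsub
  rw [Finset.card_union_of_disjoint Finset.disjoint_sdiff] at hcard
  rw [← coe_imFinset, ← Finset.coe_sdiff, ncard_coe_finset] at hs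
  have : (F.card : ℝ) + (r.imFinset s F \ F).card ≤ (r.imBiUnion (insert 1 K) F).card := by
    exact_mod_cast hcard
  linarith

lemma exists_doubling (hinv : ∀ s, r.im s A ⊆ A) {K : Finset S} {ε : ℝ} (hε : 0 < ε)
    (hK : r.ExpandsBy A K ε) :
    ∃ W : Finset S, ∀ F : Finset X, ↑F ⊆ A → 2 * F.card ≤ (r.imBiUnion W F).card := by
  classical
  obtain ⟨N, hN⟩ := pow_unbounded_of_one_lt 2 (by linarith : (1 : ℝ) < 1 + ε)
  refine ⟨insert 1 K ^ N, fun F hF => ?_⟩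
  have hgrowth : ∀ n, (1 + ε) ^ n * F.card ≤ ((r.imBiUnion (insert 1 K))^[n] F).card := by
    intro n
    induction n with
    | zero => simp
    | succ n ih =>
      rw [pow_succ', mul_assoc, Function.iterate_succ_apply']
      refine (mul_le_mul_of_nonneg_left ih (by linarith)).trans
        (r.card_imBiUnion_insert_one_ge hK ?_)
      rw [← imBiUnion_pow]
      exact r.coe_imBiUnion_subset hinv _ hF
  have : (2 : ℝ) * F.card ≤ (r.imBiUnion (insert 1 K ^ N) F).card := by
    rw [imBiUnion_pow]
    exact (mul_le_mul_of_nonneg_right hN.le (Nat.cast_nonneg _)).trans (hgrowth N)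
  exact_mod_cast this

lemma exists_injective_of_doubling {W : Finset S}
    (hW : ∀ F : Finset X, ↑F ⊆ A → 2 * F.card ≤ (r.imBiUnion W F).card) :
    ∃ Φ : A × Bool → X, Injective Φ ∧ ∀ p, ∃ w ∈ W, r.α w p.1 = some (Φ p) := by
  have hHall : ∀ P : Finset (A × Bool),
      P.card ≤ (P.biUnion fun p => r.imBiUnion W {(p.1 : X)}).card := by
    intro P
    let F : Finset X := (P.image Prod.fst).map (Embedding.subtype _)
    have hFA : ↑F ⊆ A := by
      intro x hx
      obtain ⟨a, -, rfl⟩ := Finset.mem_map.1 hx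
      exact a.2
    have hsub : r.imBiUnion W F ⊆ P.biUnion fun p => r.imBiUnion W {(p.1 : X)} := by
      intro y hy
      obtain ⟨w, hw, x, hx, hxy⟩ := r.mem_imBiUnion.1 hy
      obtain ⟨a, ha, rfl⟩ := Finset.mem_map.1 hx
      obtain ⟨p, hp, rfl⟩ := Finset.mem_image.1 ha
      exact Finset.mem_biUnion.2
        ⟨p, hp, r.mem_imBiUnion.2 ⟨w, hw, _, Finset.mem_singleton_self _, hxy⟩⟩
    calc P.card ≤ (P.image Prod.fst ×ˢ (Finset.univ : Finset Bool)).card :=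
          Finset.card_le_card fun p hp =>
            Finset.mem_product.2 ⟨Finset.mem_image_of_mem _ hp, Finset.mem_univ _⟩
      _ = 2 * F.card := by simp [F, mul_comm]
      _ ≤ (r.imBiUnion W F).card := hW F hFA
      _ ≤ _ := Finset.card_le_card hsub
  obtain ⟨Φ, hΦ, hmem⟩ := (Finset.all_card_le_biUnion_card_iff_exists_injective _).1 hHall
  refine ⟨Φ, hΦ, fun p => ?_⟩
  obtain ⟨w, hw, x, hx, hxy⟩ := r.mem_imBiUnion.1 (hmem p)
  exact ⟨w, hw, Finset.mem_singleton.1 hx ▸ hxy⟩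

end Doubling

theorem sParadoxical_of_not_sDomainFolner [Countable S] (hinv : ∀ s, r.im s A ⊆ A)
    (h : ¬ r.SDomainFolner A) : r.SParadoxical A := by
  classical
  obtain ⟨K, ε, hε, hK⟩ := r.exists_expansion_of_not_sDomainFolner h
  obtain ⟨W, hW⟩ := r.exists_doubling hinv hε hK
  obtain ⟨Φ, hΦ, hΦW⟩ := r.exists_injective_of_doubling hW
  exact r.sParadoxical_of_injective hinv W Φ hΦ hΦW

end InverseSemigroupRep

theorem statement14_general {S X : Type*} [Monoid S] [Star S] [Countable S]
    (r : InverseSemigroupRep S X) (e₀ : S)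
    (hmin : ∀ f : S, (∃ s : S, f = star s * s) → e₀ * f = e₀) :
    (r.SAmenableSet (Set.univ : Set X) ↔ ¬ r.SParadoxical (r.dom e₀)) ∧
    (r.SAmenableSet (Set.univ : Set X) ↔ r.SDomainFolner (r.dom e₀)) := by
  have h12 : r.SAmenableSet univ → ¬ r.SParadoxical (r.dom e₀) := fun h =>
    r.not_sParadoxical_of_sDomainMeasurableSet (h.sDomainMeasurableSet_dom e₀)
  have h23 : ¬ r.SParadoxical (r.dom e₀) → r.SDomainFolner (r.dom e₀) :=
    not_imp_comm.1 (r.sParadoxical_of_not_sDomainFolner (r.im_dom_subset_of_minimal hmin))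
  have h31 : r.SDomainFolner (r.dom e₀) → r.SAmenableSet univ :=
    r.sAmenableSet_univ_of_sDomainFolner (r.dom_subset_dom_of_minimal hmin)
  exact ⟨⟨h12, h31 ∘ h23⟩, ⟨h23 ∘ h12, h31⟩⟩

/-- For a representation of a countable discrete unital inverse semigroup `S` possessing a
minimal projection `e₀ ∈ E(S)`, the following are equivalent: (1) `X` is `S`-amenable;
(2) `D_{e₀}` is not `S`-paradoxical; (3) `D_{e₀}` is `S`-domain Følner. -/
theorem statement14 {S X : Type*} [Monoid S] [Star S] [IsInverseSemigroup S] [Countable S]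
    (r : InverseSemigroupRep S X) (e₀ : S)
    (he₀ : ∃ s : S, e₀ = star s * s)
    (hmin : ∀ f : S, (∃ s : S, f = star s * s) → e₀ * f = e₀) :
    (r.SAmenableSet (Set.univ : Set X) ↔ ¬ r.SParadoxical (r.dom e₀)) ∧
    (r.SAmenableSet (Set.univ : Set X) ↔ r.SDomainFolner (r.dom e₀)) :=
  statement14_general r e₀ hmin
end

section
/- Let S be a countable discrete inverse semigroup. If S satisfies the Følner condition but does not satisfy the proper Følner condition, then S has a minimal projection. -/
/-- The Følner condition: for every `ε > 0` and finite `𝓕 ⊆ S` there is a finite non-empty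
`F ⊆ S` with `|sF ∪ F| ≤ (1+ε)|F|` for all `s ∈ 𝓕`. -/
def FolnerCondition (S : Type*) [Mul S] : Prop :=
  ∀ ε : ℝ, 0 < ε → ∀ 𝓕 : Finset S, ∃ F : Finset S, F.Nonempty ∧
    ∀ s ∈ 𝓕, ((((fun t => s * t) '' (F : Set S)) ∪ (F : Set S)).ncard : ℝ) ≤ (1 + ε) * F.card

/-- The proper Følner condition: in addition the Følner set `F` can be chosen to contain
any prescribed finite set `A`. -/
def ProperFolnerCondition (S : Type*) [Mul S] : Prop :=
  ∀ ε : ℝ, 0 < ε → ∀ 𝓕 A : Finset S, ∃ F : Finset S, F.Nonempty ∧ A ⊆ F ∧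
    ∀ s ∈ 𝓕, ((((fun t => s * t) '' (F : Set S)) ∪ (F : Set S)).ncard : ℝ) ≤ (1 + ε) * F.card

/-! If the proper Følner condition fails, Følner sets for some fixed `ε₀, 𝓕₀` have bounded
size. For `ε` below the reciprocal of that bound, the Følner inequality forces exact invariance,
so every `s` has a nonempty finite `s`-invariant set, and (adding `𝓕₀`) all of them lie in the
largest finite `𝓕₀`-invariant set `M`. Hence every idempotent `e` has a fixed point in `M`.
Choosing `e` with the fewest fixed points in `M`, and using that idempotents commute, these fixed
points are fixed by every idempotent; for such an `x`, the projection `x x*` lies below every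
idempotent. -/

namespace IsInverseSemigroup

variable {S : Type*} [Semigroup S] [Star S] [IsInverseSemigroup S]

theorem star_star (s : S) : star (star s) = s :=
  (star_unique (star s) s (star_mul_self_mul_star s) (mul_star_mul_self s)).symm

theorem isIdempotentElem_star_mul_self (s : S) : IsIdempotentElem (star s * s) := by
  rw [IsIdempotentElem, mul_assoc, ← mul_assoc s, mul_star_mul_self]

theorem isIdempotentElem_mul_star_self (s : S) : IsIdempotentElem (s * star s) := by
  simpa only [star_star] using isIdempotentElem_star_mul_self (star s)

theorem star_eq_self_of_isIdempotentElem {e : S} (he : IsIdempotentElem e) : star e = e :=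
  (star_unique e e (by rw [he.eq, he.eq]) (by rw [he.eq, he.eq])).symm

theorem isIdempotentElem_mul {e f : S} (he : IsIdempotentElem e) (hf : IsIdempotentElem f) :
    IsIdempotentElem (e * f) := by
  set y := star (e * f)
  have hy : y * (e * f) * y = y := star_mul_self_mul_star (e * f)
  -- `f y e` is another inverse of `e f`, hence equals `y`; this forces `y` to be idempotent.
  have hfye : f * y * e = y := by
    refine star_unique (e * f) _ ?_ ?_
    · calc e * f * (f * y * e) * (e * f) = e * (f * f) * y * (e * e) * f := by
            simp only [mul_assoc]
        _ = e * f * y * (e * f) := by simp only [he.eq, hf.eq, mul_assoc]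
        _ = e * f := mul_star_mul_self (e * f)
    · calc f * y * e * (e * f) * (f * y * e) = f * (y * ((e * e) * (f * f)) * y) * e := by
            simp only [mul_assoc]
        _ = f * y * e := by rw [he.eq, hf.eq, hy]
  have hyy : IsIdempotentElem y := by
    calc y * y = f * y * e * (f * y * e) := by rw [hfye]
      _ = f * (y * (e * f) * y) * e := by simp only [mul_assoc]
      _ = y := by rw [hy, hfye]
  rwa [← star_star (e * f), star_eq_self_of_isIdempotentElem hyy]

theorem commute_of_isIdempotentElem {e f : S} (he : IsIdempotentElem e)
    (hf : IsIdempotentElem f) : Commute e f := by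
  have hef := isIdempotentElem_mul he hf
  have hfe := isIdempotentElem_mul hf he
  have : f * e = star (e * f) := by
    refine star_unique (e * f) (f * e) ?_ ?_
    · calc e * f * (f * e) * (e * f) = e * (f * f) * (e * e) * f := by simp only [mul_assoc]
        _ = e * f := by rw [he.eq, hf.eq]; simpa only [mul_assoc] using hef.eq
    · calc f * e * (e * f) * (f * e) = f * (e * e) * (f * f) * e := by simp only [mul_assoc]
        _ = f * e := by rw [he.eq, hf.eq]; simpa only [mul_assoc] using hfe.eq
  rw [Commute, SemiconjBy, this, star_eq_self_of_isIdempotentElem hef]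

theorem exists_forall_isIdempotentElem_mul_eq_self [Nonempty S] (M : Finset S)
    (hM : ∀ e, IsIdempotentElem e → ∃ x ∈ M, e * x = x) :
    ∃ x : S, ∀ e, IsIdempotentElem e → e * x = x := by
  classical
  let fix (e : S) : Finset S := M.filter (fun x => e * x = x)
  obtain ⟨e, he, hmin⟩ := exists_minimalFor_of_wellFoundedLT IsIdempotentElem
    (fun e => (fix e).card) ⟨_, isIdempotentElem_star_mul_self (Classical.arbitrary S)⟩
  obtain ⟨x, hxM, hx⟩ := hM e he
  refine ⟨x, fun f hf => ?_⟩
  have hfe := isIdempotentElem_mul hf he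
  have hfix_fe : fix (f * e) ⊆ fix e := fun y hy => by
    simp only [fix, Finset.mem_filter] at hy ⊢
    refine ⟨hy.1, ?_⟩
    calc e * y = e * (f * e * y) := by rw [hy.2]
      _ = f * (e * e) * y := by
        rw [← mul_assoc, ← mul_assoc, (commute_of_isIdempotentElem he hf).eq, mul_assoc f e e]
      _ = y := by rw [he.eq, hy.2]
  have : fix (f * e) = fix e :=
    Finset.eq_of_subset_of_card_le hfix_fe (hmin hfe (Finset.card_le_card hfix_fe))
  obtain ⟨-, hx'⟩ := Finset.mem_filter.1
    (show x ∈ fix (f * e) from this ▸ Finset.mem_filter.2 ⟨hxM, hx⟩)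
  calc f * x = f * (f * e * x) := by rw [hx']
    _ = x := by rw [← mul_assoc, ← mul_assoc, hf.eq, hx']

theorem mul_star_self_mul_eq_self {x : S} (hx : ∀ e, IsIdempotentElem e → e * x = x) {f : S}
    (hf : IsIdempotentElem f) : x * star x * f = x * star x := by
  rw [(commute_of_isIdempotentElem (isIdempotentElem_mul_star_self x) hf).eq, ← mul_assoc, hx f hf]

end IsInverseSemigroup

theorem Set.ncard_image_union_union_le {α : Type*} (f : α → α) (s : Set α) {t : Set α}
    (ht : t.Finite) : (f '' (s ∪ t) ∪ (s ∪ t)).ncard ≤ (f '' s ∪ s).ncard + 2 * t.ncard := by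
  rw [Set.image_union, Set.union_union_union_comm]
  calc (f '' s ∪ s ∪ (f '' t ∪ t)).ncard ≤ (f '' s ∪ s).ncard + ((f '' t).ncard + t.ncard) :=
        (Set.ncard_union_le _ _).trans (Nat.add_le_add_left (Set.ncard_union_le _ _) _)
    _ ≤ (f '' s ∪ s).ncard + 2 * t.ncard := by
        have := Set.ncard_image_le (f := f) ht
        omega

theorem Finset.exists_isGreatest_of_union_closed {α : Type*} [DecidableEq α]
    {P : Finset α → Prop} (hempty : P ∅) (hunion : ∀ F G, P F → P G → P (F ∪ G)) {N : ℕ}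
    (hN : ∀ F, P F → F.card ≤ N) : ∃ M, IsGreatest {F | P F} M := by
  classical
  let hasCard (k : ℕ) : Prop := ∃ F, P F ∧ F.card = k
  obtain ⟨M, hM, hMcard⟩ : hasCard (Nat.findGreatest hasCard N) :=
    Nat.findGreatest_spec (Nat.zero_le N) ⟨∅, hempty, rfl⟩
  refine ⟨M, hM, fun F hF => ?_⟩
  have hFM := hunion F M hF hM
  have : F ∪ M = M := (Finset.eq_of_subset_of_card_le Finset.subset_union_right
    (hMcard ▸ Nat.le_findGreatest (hN _ hFM) ⟨_, hFM, rfl⟩)).symm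
  exact this ▸ Finset.subset_union_left

section Folner

variable {S : Type*} [Mul S]

open Set

def IsFolnerSet (ε : ℝ) (𝓕 F : Finset S) : Prop :=
  ∀ s ∈ 𝓕, ((((fun t => s * t) '' (F : Set S)) ∪ (F : Set S)).ncard : ℝ) ≤ (1 + ε) * F.card

theorem IsFolnerSet.mono {ε ε' : ℝ} {𝓕 𝓕' F : Finset S} (h : IsFolnerSet ε 𝓕 F) (hε : ε ≤ ε')
    (h𝓕 : 𝓕' ⊆ 𝓕) : IsFolnerSet ε' 𝓕' F := fun s hs =>
  (h s (h𝓕 hs)).trans (by gcongr)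

theorem isFolnerSet_of_mapsTo {ε : ℝ} (hε : 0 ≤ ε) {𝓕 F : Finset S}
    (h : ∀ s ∈ 𝓕, MapsTo (s * ·) F F) : IsFolnerSet ε 𝓕 F := fun s hs => by
  rw [union_eq_self_of_subset_left (h s hs).image_subset, ncard_coe_finset]
  nlinarith [Nat.cast_nonneg (α := ℝ) F.card]

theorem IsFolnerSet.mapsTo {ε : ℝ} {𝓕 F : Finset S} (h : IsFolnerSet ε 𝓕 F)
    (hε : ε * F.card < 1) {s : S} (hs : s ∈ 𝓕) : MapsTo (s * ·) F F := by
  have hlt : ((((s * ·) '' (F : Set S)) ∪ F).ncard : ℝ) < F.card + 1 := by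
    linarith [h s hs]
  have hle : (((s * ·) '' (F : Set S)) ∪ F).ncard ≤ (F : Set S).ncard := by
    rw [ncard_coe_finset]; exact_mod_cast Nat.lt_add_one_iff.mp (by exact_mod_cast hlt)
  have := eq_of_subset_of_ncard_le subset_union_right hle
    ((F.finite_toSet.image _).union F.finite_toSet)
  exact mapsTo_iff_image_subset.2 (subset_union_left.trans this.symm.subset)

theorem properFolnerCondition_of_forall_exists_le_card
    (h : ∀ ε : ℝ, 0 < ε → ∀ (𝓕 : Finset S) (N : ℕ),
      ∃ F : Finset S, N ≤ F.card ∧ IsFolnerSet ε 𝓕 F) :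
    ProperFolnerCondition S := by
  classical
  intro ε hε 𝓕 A
  obtain ⟨F, hFcard, hF⟩ := h (ε / 2) (by positivity) 𝓕 (⌈4 * A.card / ε⌉₊ + 1)
  have hA : 4 * (A.card : ℝ) ≤ ε * F.card := by
    rw [← div_le_iff₀' hε]
    exact (Nat.le_ceil _).trans (by exact_mod_cast (Nat.le_succ _).trans hFcard)
  have hFne : F.Nonempty := Finset.card_pos.1 (Nat.succ_pos _ |>.trans_le hFcard)
  refine ⟨F ∪ A, hFne.mono Finset.subset_union_left, Finset.subset_union_right, fun s hs => ?_⟩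
  have hsA := ncard_image_union_union_le (s * ·) F A.finite_toSet
  rw [ncard_coe_finset] at hsA
  rw [Finset.coe_union]
  calc ((((s * ·) '' (↑F ∪ ↑A)) ∪ (↑F ∪ ↑A)).ncard : ℝ)
      ≤ (((s * ·) '' (F : Set S) ∪ F).ncard : ℝ) + 2 * A.card := by exact_mod_cast hsA
    _ ≤ (1 + ε) * F.card := by linarith [hF s hs]
    _ ≤ (1 + ε) * (F ∪ A).card := by gcongr; exact Finset.subset_union_left

theorem exists_nonempty_mapsTo_of_forall_card_lt (h : FolnerCondition S) {ε₀ : ℝ} (hε₀ : 0 < ε₀)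
    {𝓕₀ : Finset S} {N : ℕ} (hN : ∀ F, IsFolnerSet ε₀ 𝓕₀ F → F.card < N) (𝓕 : Finset S) :
    ∃ F : Finset S, F.Nonempty ∧ ∀ s ∈ 𝓕, MapsTo (s * ·) F F := by
  classical
  obtain ⟨F, hFne, hF⟩ := h (min ε₀ (1 / (N + 1))) (by positivity) (𝓕 ∪ 𝓕₀)
  have hFN : (F.card : ℝ) < N := by
    exact_mod_cast hN F (IsFolnerSet.mono hF (min_le_left _ _) Finset.subset_union_right)
  have hsmall : min ε₀ (1 / (N + 1)) * F.card < 1 :=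
    calc min ε₀ (1 / (N + 1)) * F.card ≤ 1 / (N + 1) * F.card := by gcongr; exact min_le_right _ _
      _ < 1 := by rw [one_div_mul_eq_div, div_lt_one (by positivity)]; linarith
  exact ⟨F, hFne, fun s hs => IsFolnerSet.mapsTo hF hsmall (Finset.mem_union_left _ hs)⟩

theorem exists_finset_forall_exists_mapsTo_subset (h₁ : FolnerCondition S)
    (h₂ : ¬ ProperFolnerCondition S) :
    ∃ M : Finset S, ∀ s : S, ∃ F ⊆ M, F.Nonempty ∧ MapsTo (s * ·) F F := by
  classical
  obtain ⟨ε₀, hε₀, 𝓕₀, N, hN⟩ : ∃ ε₀ : ℝ, 0 < ε₀ ∧ ∃ (𝓕₀ : Finset S) (N : ℕ),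
      ∀ F, IsFolnerSet ε₀ 𝓕₀ F → F.card < N := by
    contrapose! h₂
    exact properFolnerCondition_of_forall_exists_le_card fun ε hε 𝓕 N =>
      (h₂ ε hε 𝓕 N).imp fun F hF => ⟨hF.2, hF.1⟩
  obtain ⟨M, -, hM⟩ := Finset.exists_isGreatest_of_union_closed
    (P := fun F => ∀ s ∈ 𝓕₀, MapsTo (s * ·) (F : Set S) F) (fun s _ => by simp)
    (fun F G hF hG s hs => by simpa only [Finset.coe_union] using (hF s hs).union_union (hG s hs))
    (fun F hF => (hN F (isFolnerSet_of_mapsTo hε₀.le hF)).le)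
  refine ⟨M, fun s => ?_⟩
  obtain ⟨F, hFne, hF⟩ := exists_nonempty_mapsTo_of_forall_card_lt h₁ hε₀ hN (insert s 𝓕₀)
  exact ⟨F, hM fun t ht => hF t (Finset.mem_insert_of_mem ht), hFne,
    hF s (Finset.mem_insert_self _ _)⟩

end Folner

theorem statement15_general (S : Type*) [Monoid S] [Star S] [IsInverseSemigroup S]
    (h1 : FolnerCondition S) (h2 : ¬ ProperFolnerCondition S) :
    ∃ e₀ : S, (∃ s : S, e₀ = star s * s) ∧
      ∀ f : S, (∃ s : S, f = star s * s) → e₀ * f = e₀ := by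
  obtain ⟨M, hM⟩ := exists_finset_forall_exists_mapsTo_subset h1 h2
  obtain ⟨x, hx⟩ := IsInverseSemigroup.exists_forall_isIdempotentElem_mul_eq_self M fun e he => by
    obtain ⟨F, hFM, ⟨y, hy⟩, hF⟩ := hM e
    exact ⟨e * y, hFM (hF hy), by rw [← mul_assoc, he.eq]⟩
  refine ⟨x * star x, ⟨star x, by rw [IsInverseSemigroup.star_star]⟩, ?_⟩
  rintro f ⟨s, rfl⟩
  exact IsInverseSemigroup.mul_star_self_mul_eq_self hx
    (IsInverseSemigroup.isIdempotentElem_star_mul_self s)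

/-- If a countable discrete inverse semigroup satisfies the Følner condition but not the
proper Følner condition, then it has a minimal projection: an idempotent `e₀ ∈ E(S)` with
`e₀ f = e₀` for every `f ∈ E(S)`. -/
theorem statement15 (S : Type*) [Monoid S] [Star S] [IsInverseSemigroup S] [Countable S]
    (h1 : FolnerCondition S) (h2 : ¬ ProperFolnerCondition S) :
    ∃ e₀ : S, (∃ s : S, e₀ = star s * s) ∧
      ∀ f : S, (∃ s : S, f = star s * s) → e₀ * f = e₀ :=
  statement15_general S h1 h2
end
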